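/- arXiv:1703.06515 — 8 statements merged into one kernel-verified Lean document; each statement's English description precedes it below -/
import Mathlib

section
/- Under the standing hypotheses on (X, φ, r, r0, E₊, E₋), the sets Γ₊, Γ₋ and K = Γ₊ ∩ Γ₋ are closed subsets of X, and K ⊆ {x ∈ X : r(x) < r0}. -/
open Filter

/-- The outgoing tail: points whose radius does not tend to `+∞` as `t → −∞`. -/
def GammaPlus {X : Type*} (φ : ℝ → X → X) (r : X → ℝ) : Set X :=
  {x | ¬ Tendsto (fun t => r (φ t x)) atBot atTop}

/-- The incoming tail: points whose radius does not tend to `+∞` as `t → +∞`. -/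
def GammaMinus {X : Type*} (φ : ℝ → X → X) (r : X → ℝ) : Set X :=
  {x | ¬ Tendsto (fun t => r (φ t x)) atTop atTop}

/-- The trapped set `K = Γ₊ ∩ Γ₋`. -/
def TrappedSet {X : Type*} (φ : ℝ → X → X) (r : X → ℝ) : Set X :=
  GammaPlus φ r ∩ GammaMinus φ r

lemma auxGP {X : Type*} [MetricSpace X]
    (φ : ℝ → X → X)
    (hφ0 : ∀ x, φ 0 x = x)
    (hφadd : ∀ s t : ℝ, ∀ x, φ (s + t) x = φ s (φ t x))
    (hφcont : Continuous fun p : ℝ × X => φ p.1 p.2)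
    (r : X → ℝ) (hr : Continuous r)
    (r0 : ℝ) (E : Set X)
    (hE : ∀ x ∈ E, ∀ t : ℝ, 0 ≤ t →
      φ (-t) x ∈ E ∧ Real.sqrt (r x ^ 2 + t ^ 2) ≤ r (φ (-t) x))
    (hin : ∀ x, r0 < r x → (∃ t0 : ℝ, 0 < t0 ∧ r (φ t0 x) ≤ r x) →
      x ∈ interior E) :
    IsClosed (GammaPlus φ r) ∧ ∀ x ∈ E, x ∉ GammaPlus φ r := by
  have esc : ∀ (x : X) (T : ℝ), 0 ≤ T → φ (-T) x ∈ E →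
      Tendsto (fun t => r (φ t x)) atBot atTop := by
    intro x T hT hmem
    apply tendsto_atTop_mono' atBot
      (show (fun t => -t - T) ≤ᶠ[atBot] fun t => r (φ t x) from ?_)
    · have : Tendsto (fun t : ℝ => -t + (-T)) atBot atTop :=
        tendsto_atTop_add_const_right atBot (-T) tendsto_neg_atBot_atTop
      simpa [sub_eq_add_neg] using this
    · filter_upwards [eventually_le_atBot (-T)] with t ht
      have hs0 : (0:ℝ) ≤ -t - T := by linarith
      have h1 : Real.sqrt (r (φ (-T) x) ^ 2 + (-t - T) ^ 2) ≤
          r (φ (-(-t - T)) (φ (-T) x)) := (hE _ hmem _ hs0).2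
      have harg : -(-t - T) + -T = t := by ring
      rw [← hφadd, harg] at h1
      have h2 : -t - T ≤ Real.sqrt (r (φ (-T) x) ^ 2 + (-t - T) ^ 2) := by
        have := Real.sqrt_le_sqrt
          (show (-t - T)^2 ≤ r (φ (-T) x) ^ 2 + (-t - T) ^ 2 by nlinarith [sq_nonneg (r (φ (-T) x))])
        rwa [Real.sqrt_sq hs0] at this
      linarith
  constructor
  · rw [← isOpen_compl_iff]
    have hset : (GammaPlus φ r)ᶜ = ⋃ T ∈ Set.Ici (0:ℝ), (fun x => φ (-T) x) ⁻¹' interior E := by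
      ext x
      simp only [Set.mem_compl_iff, GammaPlus, Set.mem_setOf_eq, not_not, Set.mem_iUnion,
        Set.mem_preimage, Set.mem_Ici, exists_prop]
      constructor
      · intro h
        obtain ⟨t2, ht2gt, ht2le⟩ :=
          ((h.eventually_gt_atTop (max r0 (r x))).and (eventually_le_atBot 0)).exists
        have hc : ContinuousOn (fun s => r (φ s x)) (Set.Icc t2 0) :=
          (hr.comp (hφcont.comp (continuous_id.prodMk continuous_const))).continuousOn
        obtain ⟨s, hsmem, hsmax⟩ :=
          isCompact_Icc.exists_isMaxOn (Set.nonempty_Icc.2 ht2le) hc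
        have hgs : max r0 (r x) < r (φ s x) :=
          lt_of_lt_of_le ht2gt (hsmax (Set.left_mem_Icc.2 ht2le))
        have hs0 : s < 0 := by
          rcases lt_or_eq_of_le hsmem.2 with h' | h'
          · exact h'
          · exfalso
            rw [h', hφ0] at hgs
            exact absurd hgs (not_lt.2 (le_max_right _ _))
        refine ⟨-s, by linarith, ?_⟩
        have hle : r (φ (-s) (φ s x)) ≤ r (φ s x) := by
          rw [← hφadd, neg_add_cancel, hφ0]
          exact le_of_lt (lt_of_le_of_lt (le_max_right _ _) hgs)
        have := hin (φ s x) (lt_of_le_of_lt (le_max_left _ _) hgs)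
          ⟨-s, by linarith, hle⟩
        simpa using this
      · rintro ⟨T, hT, hmem⟩
        exact esc x T hT (interior_subset hmem)
    rw [hset]
    exact isOpen_biUnion fun T _ =>
      isOpen_interior.preimage (hφcont.comp (continuous_const.prodMk continuous_id))
  · intro x hx hg
    exact hg (esc x 0 le_rfl (by simpa [hφ0] using hx))

/-- Lemma 2.1, part 1: the sets `Γ₊`, `Γ₋`, `K = Γ₊ ∩ Γ₋` are closed, and
`K ⊆ {r < r0}`. -/
theorem stmt2 {X : Type*} [MetricSpace X]
    (φ : ℝ → X → X)
    (hφ0 : ∀ x, φ 0 x = x)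
    (hφadd : ∀ s t : ℝ, ∀ x, φ (s + t) x = φ s (φ t x))
    (hφcont : Continuous fun p : ℝ × X => φ p.1 p.2)
    (r : X → ℝ) (hr : Continuous r)
    (hrcomp : ∀ c : ℝ, IsCompact {x | r x ≤ c})
    (r0 : ℝ) (hr0 : 0 < r0)
    (Ep Em : Set X)
    (hEsub : Ep ∪ Em ⊆ {x | r0 ≤ r x})
    (hEsup : {x | r0 ≤ r x} ⊆ Ep ∪ Em)
    (hEp : ∀ x ∈ Ep, ∀ t : ℝ, 0 ≤ t →
      φ t x ∈ Ep ∧ Real.sqrt (r x ^ 2 + t ^ 2) ≤ r (φ t x))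
    (hEm : ∀ x ∈ Em, ∀ t : ℝ, 0 ≤ t →
      φ (-t) x ∈ Em ∧ Real.sqrt (r x ^ 2 + t ^ 2) ≤ r (φ (-t) x))
    (hEpInt : ∀ t : ℝ, 0 ≤ t → ∀ x ∈ interior Ep, φ t x ∈ interior Ep)
    (hEmInt : ∀ t : ℝ, 0 ≤ t → ∀ x ∈ interior Em, φ (-t) x ∈ interior Em)
    (hout : ∀ x, r0 < r x → (∃ t0 : ℝ, 0 < t0 ∧ r (φ (-t0) x) ≤ r x) →
      x ∈ interior Ep)
    (hin : ∀ x, r0 < r x → (∃ t0 : ℝ, 0 < t0 ∧ r (φ t0 x) ≤ r x) →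
      x ∈ interior Em) :
    IsClosed (GammaPlus φ r) ∧ IsClosed (GammaMinus φ r) ∧
      IsClosed (TrappedSet φ r) ∧ TrappedSet φ r ⊆ {x | r x < r0} := by
  -- the reversed flow
  set ψ : ℝ → X → X := fun t x => φ (-t) x with hψdef
  have hψ0 : ∀ x, ψ 0 x = x := by intro x; simp [hψdef, hφ0]
  have hψadd : ∀ s t : ℝ, ∀ x, ψ (s + t) x = ψ s (ψ t x) := by
    intro s t x
    simp only [hψdef, neg_add]
    exact hφadd (-s) (-t) x
  have hψcont : Continuous fun p : ℝ × X => ψ p.1 p.2 :=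
    hφcont.comp ((continuous_neg.comp continuous_fst).prodMk continuous_snd)
  have hEp' : ∀ x ∈ Ep, ∀ t : ℝ, 0 ≤ t →
      ψ (-t) x ∈ Ep ∧ Real.sqrt (r x ^ 2 + t ^ 2) ≤ r (ψ (-t) x) := by
    intro x hx t ht
    simpa [hψdef] using hEp x hx t ht
  have hout' : ∀ x, r0 < r x → (∃ t0 : ℝ, 0 < t0 ∧ r (ψ t0 x) ≤ r x) →
      x ∈ interior Ep := hout
  obtain ⟨hclP, hescP⟩ := auxGP φ hφ0 hφadd hφcont r hr r0 Em hEm hin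
  obtain ⟨hclM, hescM⟩ := auxGP ψ hψ0 hψadd hψcont r hr r0 Ep hEp' hout'
  have hGm : GammaMinus φ r = GammaPlus ψ r := by
    ext x
    simp only [GammaMinus, GammaPlus, Set.mem_setOf_eq, hψdef]
    constructor <;> intro h1 h2 <;> apply h1
    · have := h2.comp (tendsto_neg_atTop_atBot : Tendsto (fun t : ℝ => -t) atTop atBot)
      simpa [Function.comp_def] using this
    · exact h2.comp (tendsto_neg_atBot_atTop : Tendsto (fun t : ℝ => -t) atBot atTop)
  refine ⟨hclP, ?_, ?_, ?_⟩
  · rw [hGm]; exact hclM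
  · exact IsClosed.inter hclP (by rw [hGm]; exact hclM)
  · intro x hx
    by_contra h
    have hge : r0 ≤ r x := not_lt.1 h
    rcases hEsup hge with hmem | hmem
    · have : x ∈ GammaPlus ψ r := by rw [← hGm]; exact hx.2
      exact hescM x hmem this
    · exact hescP x hmem hx.1
end

section
/- Under the standing hypotheses on (X, φ, r, r0, E₊, E₋): for every compact V ⊆ X and every ε > 0 there exists T ≥ 0 such that for all x ∈ V ∩ Γ₋ and all t ≥ T there exists y ∈ K with d(φ_t(x), y) < ε, and for all x ∈ V ∩ Γ₊ and all t ≥ T there exists y ∈ K with d(φ_{−t}(x), y) < ε. In particular, points of Γ_± converge to the trapped set K as t → ∓∞, locally uniformly. -/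
open Filter

-- reversal lemmas
lemma gammaMinus_rev {X : Type*} (φ : ℝ → X → X) (r : X → ℝ) :
    GammaMinus (fun t x => φ (-t) x) r = GammaPlus φ r := by
  ext x
  simp only [GammaMinus, GammaPlus, Set.mem_setOf_eq, not_iff_not]
  constructor
  · intro h
    have := h.comp tendsto_neg_atBot_atTop
    simpa [Function.comp_def, neg_neg] using this
  · intro h
    simpa [Function.comp_def] using h.comp tendsto_neg_atTop_atBot

lemma gammaPlus_rev {X : Type*} (φ : ℝ → X → X) (r : X → ℝ) :
    GammaPlus (fun t x => φ (-t) x) r = GammaMinus φ r := by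
  ext x
  simp only [GammaMinus, GammaPlus, Set.mem_setOf_eq, not_iff_not]
  constructor
  · intro h
    have := h.comp tendsto_neg_atTop_atBot
    simpa [Function.comp_def, neg_neg] using this
  · intro h
    simpa [Function.comp_def] using h.comp tendsto_neg_atBot_atTop

lemma trapped_rev {X : Type*} (φ : ℝ → X → X) (r : X → ℝ) :
    TrappedSet (fun t x => φ (-t) x) r = TrappedSet φ r := by
  unfold TrappedSet
  rw [gammaMinus_rev, gammaPlus_rev, Set.inter_comm]

-- shift invariance
lemma gammaMinus_shift {X : Type*} (φ : ℝ → X → X)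
    (hφadd : ∀ s t : ℝ, ∀ x, φ (s + t) x = φ s (φ t x)) (r : X → ℝ)
    {x : X} (hx : x ∈ GammaMinus φ r) (s : ℝ) : φ s x ∈ GammaMinus φ r := by
  simp only [GammaMinus, Set.mem_setOf_eq] at hx ⊢
  intro h
  apply hx
  have h2 : Tendsto (fun t : ℝ => t + (-s)) atTop atTop :=
    tendsto_atTop_add_const_right _ _ tendsto_id
  have := h.comp h2
  have heq : (fun t : ℝ => r (φ t (φ s x))) ∘ (fun t : ℝ => t + (-s))
      = fun t : ℝ => r (φ t x) := by
    funext t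
    simp only [Function.comp]
    rw [← hφadd]
    ring_nf
  rwa [heq] at this

/-- Claim B: forward orbits of `Γ₋` points stay radially bounded. -/
lemma forward_bound {X : Type*} [MetricSpace X] (φ : ℝ → X → X)
    (hφ0 : ∀ x, φ 0 x = x)
    (hφadd : ∀ s t : ℝ, ∀ x, φ (s + t) x = φ s (φ t x))
    (r : X → ℝ) (r0 : ℝ) (Ep : Set X)
    (hEp : ∀ x ∈ Ep, ∀ t : ℝ, 0 ≤ t → Real.sqrt (r x ^ 2 + t ^ 2) ≤ r (φ t x))
    (hout : ∀ x, r0 < r x → (∃ t0 : ℝ, 0 < t0 ∧ r (φ (-t0) x) ≤ r x) →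
      x ∈ interior Ep) :
    ∀ x ∈ GammaMinus φ r, ∀ t : ℝ, 0 ≤ t → r (φ t x) ≤ max (r x) r0 := by
  intro x hx t ht
  by_contra hcon
  push_neg at hcon
  have htpos : 0 < t := by
    rcases lt_or_eq_of_le ht with h | h
    · exact h
    · exfalso; rw [← h, hφ0] at hcon
      exact absurd (le_max_left (r x) r0) (not_le.mpr hcon)
  set y := φ t x with hy
  have hr0y : r0 < r y := lt_of_le_of_lt (le_max_right _ _) hcon
  have hback : r (φ (-t) y) ≤ r y := by
    have : φ (-t) y = x := by rw [hy, ← hφadd, neg_add_cancel, hφ0]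
    rw [this]
    exact le_of_lt (lt_of_le_of_lt (le_max_left _ _) hcon)
  have hyEp : y ∈ Ep := interior_subset (hout y hr0y ⟨t, htpos, hback⟩)
  have hyG : y ∈ GammaMinus φ r := gammaMinus_shift φ hφadd r hx t
  apply hyG
  have hev : (fun s : ℝ => s) ≤ᶠ[atTop] fun s : ℝ => r (φ s y) := by
    filter_upwards [eventually_ge_atTop (0 : ℝ)] with s hs
    calc (s : ℝ) = Real.sqrt (s ^ 2) := by rw [Real.sqrt_sq hs]
      _ ≤ Real.sqrt (r y ^ 2 + s ^ 2) := by
          apply Real.sqrt_le_sqrt; nlinarith [sq_nonneg (r y)]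
      _ ≤ r (φ s y) := (hEp y hyEp s hs)
  exact tendsto_atTop_mono' atTop hev tendsto_id
lemma onesided {X : Type*} [MetricSpace X] (φ : ℝ → X → X)
    (hφ0 : ∀ x, φ 0 x = x)
    (hφadd : ∀ s t : ℝ, ∀ x, φ (s + t) x = φ s (φ t x))
    (hφcont : Continuous fun p : ℝ × X => φ p.1 p.2)
    (r : X → ℝ) (hr : Continuous r)
    (hrcomp : ∀ c : ℝ, IsCompact {x | r x ≤ c})
    (r0 : ℝ) (Ep : Set X)
    (hEp : ∀ x ∈ Ep, ∀ t : ℝ, 0 ≤ t → Real.sqrt (r x ^ 2 + t ^ 2) ≤ r (φ t x))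
    (hout : ∀ x, r0 < r x → (∃ t0 : ℝ, 0 < t0 ∧ r (φ (-t0) x) ≤ r x) →
      x ∈ interior Ep) :
    ∀ V : Set X, IsCompact V → ∀ ε : ℝ, 0 < ε →
      ∃ T : ℝ, 0 ≤ T ∧ ∀ x ∈ V ∩ GammaMinus φ r, ∀ t : ℝ, T ≤ t →
        ∃ y ∈ TrappedSet φ r, dist (φ t x) y < ε := by
  intro V hV ε hε
  by_contra hcon
  push_neg at hcon
  -- extract sequences
  have hseq : ∀ n : ℕ, ∃ x ∈ V ∩ GammaMinus φ r, ∃ t : ℝ, (n : ℝ) ≤ t ∧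
      ∀ y ∈ TrappedSet φ r, ε ≤ dist (φ t x) y := by
    intro n
    exact hcon n (Nat.cast_nonneg n)
  choose x hxmem t hnt hsep using hseq
  have hxV : ∀ n, x n ∈ V := fun n => (hxmem n).1
  have hxG : ∀ n, x n ∈ GammaMinus φ r := fun n => (hxmem n).2
  have htn : ∀ n : ℕ, (0:ℝ) ≤ t n := fun n => le_trans (Nat.cast_nonneg n) (hnt n)
  -- bound r on V
  obtain ⟨R, hR⟩ : ∃ R : ℝ, ∀ z ∈ V, r z ≤ R := by
    obtain ⟨R, hR⟩ := (hV.image hr).bddAbove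
    exact ⟨R, fun z hz => hR (Set.mem_image_of_mem r hz)⟩
  set M := max R r0 with hM
  have hFB := forward_bound φ hφ0 hφadd r r0 Ep hEp hout
  -- the key uniform bound
  have hbd : ∀ n : ℕ, ∀ s : ℝ, 0 ≤ s → r (φ s (x n)) ≤ M := by
    intro n s hs
    refine le_trans (hFB (x n) (hxG n) s hs) ?_
    exact max_le_max (hR _ (hxV n)) le_rfl
  set y : ℕ → X := fun n => φ (t n) (x n) with hy
  have hyC : ∀ n, y n ∈ {z | r z ≤ M} := fun n => hbd n (t n) (htn n)
  obtain ⟨z, hzC, ψ, hψmono, hψlim⟩ := (hrcomp M).tendsto_subseq hyC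
  -- continuity of each time-s map
  have hcont : ∀ s : ℝ, Continuous (φ s) := fun s =>
    hφcont.comp (continuous_const.prodMk continuous_id)
  -- for every u : ℝ, r (φ u z) ≤ M
  have hkey : ∀ u : ℝ, r (φ u z) ≤ M := by
    intro u
    have hlim : Filter.Tendsto (fun n => r (φ u (y (ψ n)))) Filter.atTop
        (nhds (r (φ u z))) := ((hr.tendsto _).comp ((hcont u).tendsto z)).comp hψlim
    apply le_of_tendsto hlim
    filter_upwards [Filter.eventually_ge_atTop ⌈-u⌉₊] with n hn
    have h1 : -u ≤ (n : ℝ) := le_trans (Nat.le_ceil _) (by exact_mod_cast hn)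
    have h2 : (n : ℝ) ≤ t (ψ n) := le_trans (by exact_mod_cast hψmono.le_apply) (hnt (ψ n))
    have h3 : 0 ≤ u + t (ψ n) := by linarith
    have heq : φ u (y (ψ n)) = φ (u + t (ψ n)) (x (ψ n)) := by
      rw [hy, ← hφadd]
    rw [heq]
    exact hbd (ψ n) _ h3
  -- z is trapped
  have hzT : z ∈ TrappedSet φ r := by
    constructor
    · intro h
      obtain ⟨u, hu⟩ := (h.eventually (Filter.eventually_gt_atTop M)).exists
      exact absurd (hkey u) (not_le.mpr hu)
    · intro h
      obtain ⟨u, hu⟩ := (h.eventually (Filter.eventually_gt_atTop M)).exists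
      exact absurd (hkey u) (not_le.mpr hu)
  -- contradiction with separation
  obtain ⟨N, hN⟩ := Metric.tendsto_atTop.mp hψlim ε hε
  have h1 := hN N le_rfl
  have h2 := hsep (ψ N) z hzT
  simp only [Function.comp] at h1
  exact absurd h1 (not_lt.mpr h2)

/-- Lemma 2.1, part 2: points of `Γ₋` (resp. `Γ₊`) converge to the trapped set `K`
as `t → +∞` (resp. `t → −∞`), locally uniformly. -/
theorem stmt3 {X : Type*} [MetricSpace X]
    (φ : ℝ → X → X)
    (hφ0 : ∀ x, φ 0 x = x)
    (hφadd : ∀ s t : ℝ, ∀ x, φ (s + t) x = φ s (φ t x))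
    (hφcont : Continuous fun p : ℝ × X => φ p.1 p.2)
    (r : X → ℝ) (hr : Continuous r)
    (hrcomp : ∀ c : ℝ, IsCompact {x | r x ≤ c})
    (r0 : ℝ) (hr0 : 0 < r0)
    (Ep Em : Set X)
    (hEsub : Ep ∪ Em ⊆ {x | r0 ≤ r x})
    (hEsup : {x | r0 ≤ r x} ⊆ Ep ∪ Em)
    (hEp : ∀ x ∈ Ep, ∀ t : ℝ, 0 ≤ t →
      φ t x ∈ Ep ∧ Real.sqrt (r x ^ 2 + t ^ 2) ≤ r (φ t x))
    (hEm : ∀ x ∈ Em, ∀ t : ℝ, 0 ≤ t →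
      φ (-t) x ∈ Em ∧ Real.sqrt (r x ^ 2 + t ^ 2) ≤ r (φ (-t) x))
    (hEpInt : ∀ t : ℝ, 0 ≤ t → ∀ x ∈ interior Ep, φ t x ∈ interior Ep)
    (hEmInt : ∀ t : ℝ, 0 ≤ t → ∀ x ∈ interior Em, φ (-t) x ∈ interior Em)
    (hout : ∀ x, r0 < r x → (∃ t0 : ℝ, 0 < t0 ∧ r (φ (-t0) x) ≤ r x) →
      x ∈ interior Ep)
    (hin : ∀ x, r0 < r x → (∃ t0 : ℝ, 0 < t0 ∧ r (φ t0 x) ≤ r x) →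
      x ∈ interior Em) :
    ∀ V : Set X, IsCompact V → ∀ ε : ℝ, 0 < ε →
      ∃ T : ℝ, 0 ≤ T ∧
        (∀ x ∈ V ∩ GammaMinus φ r, ∀ t : ℝ, T ≤ t →
          ∃ y ∈ TrappedSet φ r, dist (φ t x) y < ε) ∧
        (∀ x ∈ V ∩ GammaPlus φ r, ∀ t : ℝ, T ≤ t →
          ∃ y ∈ TrappedSet φ r, dist (φ (-t) x) y < ε) := by

  intro V hV ε hε
  -- the forward statement
  obtain ⟨T₁, hT₁0, hT₁⟩ := onesided φ hφ0 hφadd hφcont r hr hrcomp r0 Ep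
    (fun x hx t ht => (hEp x hx t ht).2) hout V hV ε hε
  -- the backward statement, via the reversed flow
  set ψ : ℝ → X → X := fun t x => φ (-t) x with hψ
  have hψ0 : ∀ x, ψ 0 x = x := by
    intro x; simp only [hψ, neg_zero, hφ0]
  have hψadd : ∀ s t : ℝ, ∀ x, ψ (s + t) x = ψ s (ψ t x) := by
    intro s t x
    simp only [hψ, neg_add]
    rw [hφadd]
  have hψcont : Continuous fun p : ℝ × X => ψ p.1 p.2 :=
    hφcont.comp ((continuous_fst.neg).prodMk continuous_snd)
  have hψout : ∀ x, r0 < r x → (∃ t0 : ℝ, 0 < t0 ∧ r (ψ (-t0) x) ≤ r x) →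
      x ∈ interior Em := by
    intro x hx ⟨t0, ht0, hle⟩
    apply hin x hx
    refine ⟨t0, ht0, ?_⟩
    simpa only [hψ, neg_neg] using hle
  obtain ⟨T₂, hT₂0, hT₂⟩ := onesided ψ hψ0 hψadd hψcont r hr hrcomp r0 Em
    (fun x hx t ht => (hEm x hx t ht).2) hψout V hV ε hε
  refine ⟨max T₁ T₂, le_trans hT₁0 (le_max_left _ _), ?_, ?_⟩
  · intro x hx t ht
    exact hT₁ x hx t (le_trans (le_max_left _ _) ht)
  · intro x hx t ht
    have hx' : x ∈ V ∩ GammaMinus ψ r := by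
      rw [gammaMinus_rev]; exact hx
    obtain ⟨y, hy, hd⟩ := hT₂ x hx' t (le_trans (le_max_right _ _) ht)
    rw [trapped_rev] at hy
    exact ⟨y, hy, hd⟩
end

section
/- Under the standing hypotheses on (X, φ, r, r0, E₊, E₋): for every open set U ⊆ X containing K and every compact set V ⊆ X, there exists T > 0 such that φ_{−t}(V) ∩ φ_s(V) ⊆ U for all t, s ≥ T, where φ_{−t}(V) and φ_s(V) denote images of V under the flow. -/
open Filter

/-- Lemma 2.1, part 3: for every open neighborhood `U` of the trapped set `K` and
every compact `V`, there is `T > 0` with `φ_{−t}(V) ∩ φ_s(V) ⊆ U` for all `t, s ≥ T`. -/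
theorem stmt4 {X : Type*} [MetricSpace X]
    (φ : ℝ → X → X)
    (hφ0 : ∀ x, φ 0 x = x)
    (hφadd : ∀ s t : ℝ, ∀ x, φ (s + t) x = φ s (φ t x))
    (hφcont : Continuous fun p : ℝ × X => φ p.1 p.2)
    (r : X → ℝ) (hr : Continuous r)
    (hrcomp : ∀ c : ℝ, IsCompact {x | r x ≤ c})
    (r0 : ℝ) (hr0 : 0 < r0)
    (Ep Em : Set X)
    (hEsub : Ep ∪ Em ⊆ {x | r0 ≤ r x})
    (hEsup : {x | r0 ≤ r x} ⊆ Ep ∪ Em)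
    (hEp : ∀ x ∈ Ep, ∀ t : ℝ, 0 ≤ t →
      φ t x ∈ Ep ∧ Real.sqrt (r x ^ 2 + t ^ 2) ≤ r (φ t x))
    (hEm : ∀ x ∈ Em, ∀ t : ℝ, 0 ≤ t →
      φ (-t) x ∈ Em ∧ Real.sqrt (r x ^ 2 + t ^ 2) ≤ r (φ (-t) x))
    (hEpInt : ∀ t : ℝ, 0 ≤ t → ∀ x ∈ interior Ep, φ t x ∈ interior Ep)
    (hEmInt : ∀ t : ℝ, 0 ≤ t → ∀ x ∈ interior Em, φ (-t) x ∈ interior Em)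
    (hout : ∀ x, r0 < r x → (∃ t0 : ℝ, 0 < t0 ∧ r (φ (-t0) x) ≤ r x) →
      x ∈ interior Ep)
    (hin : ∀ x, r0 < r x → (∃ t0 : ℝ, 0 < t0 ∧ r (φ t0 x) ≤ r x) →
      x ∈ interior Em) :
    ∀ U : Set X, IsOpen U → TrappedSet φ r ⊆ U →
      ∀ V : Set X, IsCompact V →
        ∃ T : ℝ, 0 < T ∧ ∀ t s : ℝ, T ≤ t → T ≤ s →
          (φ (-t) '' V) ∩ (φ s '' V) ⊆ U := by
  intro U hU hKU V hV
  classical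
  obtain ⟨c, hc⟩ := (hV.image hr).bddAbove
  have hcV : ∀ v ∈ V, r v ≤ c := fun v hv => hc (Set.mem_image_of_mem r hv)
  set R : ℝ := max c r0 with hR
  have hRc : c ≤ R := le_max_left _ _
  have hRr0 : r0 ≤ R := le_max_right _ _
  have hsq : ∀ a b : ℝ, a ≤ Real.sqrt (a ^ 2 + b ^ 2) := by
    intro a b
    refine le_trans (le_abs_self a) ?_
    rw [← Real.sqrt_sq_eq_abs]
    exact Real.sqrt_le_sqrt (by nlinarith)
  set W : Set X := {x | r x ≤ R} \ U with hWdef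
  have hWcomp : IsCompact W := (hrcomp R).diff hU
  have hcontt : ∀ τ : ℝ, Continuous fun x => φ τ x := fun τ =>
    hφcont.comp (continuous_const.prodMk continuous_id)
  have key : ∀ w : X, ∃ τ : ℝ, ∃ N : Set X, 0 < τ ∧ IsOpen N ∧ (w ∈ W → w ∈ N) ∧
      ((∀ x ∈ N, ∀ u : ℝ, τ ≤ u → c < r (φ u x)) ∨
       (∀ x ∈ N, ∀ u : ℝ, τ ≤ u → c < r (φ (-u) x))) := by
    intro w
    by_cases hw : w ∈ W
    · have hwU : w ∉ U := hw.2
      have hwK : w ∉ TrappedSet φ r := fun h => hwU (hKU h)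
      have hGG : w ∉ GammaPlus φ r ∨ w ∉ GammaMinus φ r := by
        by_contra h
        push_neg at h
        exact hwK ⟨h.1, h.2⟩
      rcases hGG with hG | hG
      · -- backward escape: Em case
        have htend : Tendsto (fun u => r (φ u w)) atBot atTop := not_not.mp hG
        obtain ⟨a, ha⟩ := (eventually_atBot).mp (htend.eventually_ge_atTop (max R (r w) + 1))
        set τ : ℝ := max (-a) 1 with hτ
        have hτpos : (0:ℝ) < τ := lt_of_lt_of_le one_pos (le_max_right _ _)
        have hta : -τ ≤ a := by
          have h1 : -a ≤ τ := le_max_left _ _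
          linarith
        have hry : max R (r w) + 1 ≤ r (φ (-τ) w) := ha _ hta
        have hback : φ τ (φ (-τ) w) = w := by
          rw [← hφadd]
          simpa using hφ0 w
        have hyr0 : r0 < r (φ (-τ) w) := by
          linarith [le_max_left R (r w), hRr0]
        have hyEm : φ (-τ) w ∈ interior Em := by
          apply hin _ hyr0
          exact ⟨τ, hτpos, by rw [hback]; linarith [le_max_right R (r w)]⟩
        refine ⟨τ, (fun x => φ (-τ) x) ⁻¹' (interior Em ∩ {z | c < r z}), hτpos, ?_, ?_, Or.inr ?_⟩
        · exact (isOpen_interior.inter (isOpen_lt continuous_const hr)).preimage (hcontt _)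
        · intro _
          exact ⟨hyEm, by simp only [Set.mem_setOf_eq]; linarith [le_max_left R (r w)]⟩
        · intro x hx u hu
          obtain ⟨hx1, hx2⟩ := hx
          have hx1' : φ (-τ) x ∈ Em := interior_subset hx1
          have hle := (hEm _ hx1' (u - τ) (by linarith)).2
          have heq : φ (-(u - τ)) (φ (-τ) x) = φ (-u) x := by
            rw [← hφadd]
            congr 1
            ring
          rw [heq] at hle
          have h3 := le_trans (hsq (r (φ (-τ) x)) (u - τ)) hle
          exact lt_of_lt_of_le hx2 h3
      · -- forward escape: Ep case
        have htend : Tendsto (fun u => r (φ u w)) atTop atTop := not_not.mp hG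
        obtain ⟨a, ha⟩ := (eventually_atTop).mp (htend.eventually_ge_atTop (max R (r w) + 1))
        set τ : ℝ := max a 1 with hτ
        have hτpos : (0:ℝ) < τ := lt_of_lt_of_le one_pos (le_max_right _ _)
        have hry : max R (r w) + 1 ≤ r (φ τ w) := ha _ (le_max_left _ _)
        have hback : φ (-τ) (φ τ w) = w := by
          rw [← hφadd]
          simpa using hφ0 w
        have hyr0 : r0 < r (φ τ w) := by
          linarith [le_max_left R (r w), hRr0]
        have hyEp : φ τ w ∈ interior Ep := by
          apply hout _ hyr0
          exact ⟨τ, hτpos, by rw [hback]; linarith [le_max_right R (r w)]⟩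
        refine ⟨τ, (fun x => φ τ x) ⁻¹' (interior Ep ∩ {z | c < r z}), hτpos, ?_, ?_, Or.inl ?_⟩
        · exact (isOpen_interior.inter (isOpen_lt continuous_const hr)).preimage (hcontt _)
        · intro _
          exact ⟨hyEp, by simp only [Set.mem_setOf_eq]; linarith [le_max_left R (r w)]⟩
        · intro x hx u hu
          obtain ⟨hx1, hx2⟩ := hx
          have hx1' : φ τ x ∈ Ep := interior_subset hx1
          have hle := (hEp _ hx1' (u - τ) (by linarith)).2
          have heq : φ (u - τ) (φ τ x) = φ u x := by
            rw [← hφadd]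
            congr 1
            ring
          rw [heq] at hle
          have h3 := le_trans (hsq (r (φ τ x)) (u - τ)) hle
          exact lt_of_lt_of_le hx2 h3
    · exact ⟨1, ∅, one_pos, isOpen_empty, fun h => absurd h hw, Or.inl (by simp)⟩
  choose τ N hτpos hNopen hNmem hNprop using key
  obtain ⟨F, hFW, hFcov⟩ := hWcomp.elim_nhds_subcover N
    (fun w hw => (hNopen w).mem_nhds (hNmem w hw))
  set T : ℝ := 1 + ∑ w ∈ F, |τ w| with hT
  have hTpos : 0 < T := by
    have h0 : 0 ≤ ∑ w ∈ F, |τ w| := Finset.sum_nonneg (fun i _ => abs_nonneg _)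
    linarith
  have hTge : ∀ w ∈ F, τ w ≤ T := by
    intro w hw
    have h1 : |τ w| ≤ ∑ v ∈ F, |τ v| :=
      Finset.single_le_sum (fun i _ => abs_nonneg (τ i)) hw
    have h2 := le_abs_self (τ w)
    linarith
  refine ⟨T, hTpos, ?_⟩
  intro t s ht hs x hx
  obtain ⟨⟨v1, hv1, hv1x⟩, ⟨v2, hv2, hv2x⟩⟩ := hx
  have hfx : φ t x ∈ V := by
    rw [← hv1x, ← hφadd]
    simpa [hφ0] using hv1
  have hbx : φ (-s) x ∈ V := by
    rw [← hv2x, ← hφadd]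
    simpa [hφ0] using hv2
  by_contra hxU
  have htpos : (0:ℝ) ≤ t := le_trans hTpos.le ht
  have hspos : (0:ℝ) ≤ s := le_trans hTpos.le hs
  have hrx : r x ≤ R := by
    by_contra hrx
    push_neg at hrx
    have hx0 : r0 ≤ r x := le_trans hRr0 hrx.le
    rcases hEsup hx0 with hxE | hxE
    · have h1 := (hEp x hxE t htpos).2
      have h2 := le_trans (hsq (r x) t) h1
      have h3 := hcV _ hfx
      linarith [lt_of_le_of_lt hRc hrx]
    · have h1 := (hEm x hxE s hspos).2
      have h2 := le_trans (hsq (r x) s) h1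
      have h3 := hcV _ hbx
      linarith [lt_of_le_of_lt hRc hrx]
  have hxW : x ∈ W := ⟨hrx, hxU⟩
  obtain ⟨w, hwF, hxN⟩ := Set.mem_iUnion₂.mp (hFcov hxW)
  rcases hNprop w with hp | hp
  · have h1 := hp x hxN t (le_trans (hTge w hwF) ht)
    have h2 := hcV _ hfx
    linarith
  · have h1 := hp x hxN s (le_trans (hTge w hwF) hs)
    have h2 := hcV _ hbx
    linarith
end

section
/- Under the standing hypotheses on (X, φ, r, r0, E₊, E₋): if V ⊆ X is compact and V ∩ Γ₋ = ∅, then there exists T > 0 such that for all t ≥ T, φ_t(V) ⊆ E₊° and r(z) ≥ √(r0² + (t − T)²) for every z ∈ φ_t(V); moreover the set ⋃_{t ≥ 0} φ_t(V) is closed in X. (Symmetrically, if V ∩ Γ₊ = ∅ the same holds with φ_{−t}, E₋°, and ⋃_{t ≤ 0} φ_t(V).) -/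
open Filter

theorem auxlem5 {X : Type*} [MetricSpace X]
    (φ : ℝ → X → X)
    (hφ0 : ∀ x, φ 0 x = x)
    (hφadd : ∀ s t : ℝ, ∀ x, φ (s + t) x = φ s (φ t x))
    (hφcont : Continuous fun p : ℝ × X => φ p.1 p.2)
    (r : X → ℝ) (hr : Continuous r)
    (r0 : ℝ) (hr0 : 0 < r0)
    (Ep : Set X)
    (hEpr : Ep ⊆ {x | r0 ≤ r x})
    (hEp : ∀ x ∈ Ep, ∀ t : ℝ, 0 ≤ t →
      φ t x ∈ Ep ∧ Real.sqrt (r x ^ 2 + t ^ 2) ≤ r (φ t x))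
    (hEpInt : ∀ t : ℝ, 0 ≤ t → ∀ x ∈ interior Ep, φ t x ∈ interior Ep)
    (hout : ∀ x, r0 < r x → (∃ t0 : ℝ, 0 < t0 ∧ r (φ (-t0) x) ≤ r x) →
      x ∈ interior Ep)
    (V : Set X) (hV : IsCompact V)
    (htend : ∀ x ∈ V, Tendsto (fun t => r (φ t x)) atTop atTop) :
    ∃ T : ℝ, 0 < T ∧
      (∀ t : ℝ, T ≤ t → ∀ x ∈ V,
        φ t x ∈ interior Ep ∧
        Real.sqrt (r0 ^ 2 + (t - T) ^ 2) ≤ r (φ t x)) ∧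
      IsClosed (⋃ t ∈ Set.Ici (0 : ℝ), φ t '' V) := by
  classical
  have key : ∀ x : V, ∃ t : ℝ, 0 < t ∧ max r0 (r (x : X)) < r (φ t x) := by
    rintro ⟨x, hx⟩
    obtain ⟨t, h1, h2⟩ :=
      (((htend x hx).eventually_gt_atTop (max r0 (r x))).and (eventually_gt_atTop 0)).exists
    exact ⟨t, h2, h1⟩
  choose tf htf hltf using key
  set U : V → Set X := fun i => {x' | max r0 (r x') < r (φ (tf i) x')} with hU
  have hUopen : ∀ i, IsOpen (U i) := fun i =>
    isOpen_lt (continuous_const.max hr)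
      (hr.comp (hφcont.comp (continuous_const.prodMk continuous_id)))
  have hcover : V ⊆ ⋃ i, U i := fun x hx => Set.mem_iUnion.2 ⟨⟨x, hx⟩, hltf ⟨x, hx⟩⟩
  obtain ⟨s, hs⟩ := hV.elim_finite_subcover U hUopen hcover
  obtain ⟨T0, hT0⟩ : ∃ T0 : ℝ, ∀ i ∈ s, tf i ≤ T0 := by
    obtain ⟨M, hM⟩ := (s.image tf).exists_le
    exact ⟨M, fun i hi => hM _ (Finset.mem_image_of_mem tf hi)⟩
  set T : ℝ := max T0 1 with hTdef
  have hTpos : (0 : ℝ) < T := lt_of_lt_of_le one_pos (le_max_right _ _)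
  have hmain : ∀ t : ℝ, T ≤ t → ∀ x ∈ V,
      φ t x ∈ interior Ep ∧ Real.sqrt (r0 ^ 2 + (t - T) ^ 2) ≤ r (φ t x) := by
    intro t ht x hx
    obtain ⟨i, hi, hxU⟩ : ∃ i ∈ s, x ∈ U i := by
      have := hs hx
      simpa [Set.mem_iUnion] using this
    have hτpos := htf i
    have hτT : tf i ≤ T := (hT0 i hi).trans (le_max_left _ _)
    have hxU' : max r0 (r x) < r (φ (tf i) x) := hxU
    have hy : φ (tf i) x ∈ interior Ep := by
      apply hout _ (lt_of_le_of_lt (le_max_left _ _) hxU')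
      refine ⟨tf i, hτpos, ?_⟩
      have hb : φ (-(tf i)) (φ (tf i) x) = x := by
        rw [← hφadd]; simp [hφ0]
      rw [hb]
      exact (le_max_right r0 (r x)).trans hxU'.le
    have hts : 0 ≤ t - tf i := by linarith
    have hfl : φ t x = φ (t - tf i) (φ (tf i) x) := by
      rw [← hφadd, sub_add_cancel]
    constructor
    · rw [hfl]; exact hEpInt _ hts _ hy
    · have hEpmem : φ (tf i) x ∈ Ep := interior_subset hy
      have hb := (hEp _ hEpmem (t - tf i) hts).2
      rw [hfl]
      refine le_trans ?_ hb
      apply Real.sqrt_le_sqrt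
      have h1 : r0 ≤ r (φ (tf i) x) := hEpr hEpmem
      have h2 : t - T ≤ t - tf i := by linarith
      have h3 : 0 ≤ t - T := by linarith
      nlinarith
  refine ⟨T, hTpos, hmain, ?_⟩
  apply isClosed_of_closure_subset
  intro z hz
  set c : ℝ := max (r z + 1) 0 with hc
  have hzc : r z < c := lt_of_lt_of_le (lt_add_one _) (le_max_left _ _)
  have hc0 : (0 : ℝ) ≤ c := le_max_right _ _
  set Q := (fun p : ℝ × X => φ p.1 p.2) '' (Set.Icc 0 (T + c) ×ˢ V) with hQ
  have hQc : IsCompact Q := (isCompact_Icc.prod hV).image hφcont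
  have hQW : Q ⊆ ⋃ t ∈ Set.Ici (0 : ℝ), φ t '' V := by
    rintro w ⟨⟨t, x⟩, ⟨ht, hx⟩, rfl⟩
    exact Set.mem_biUnion ht.1 ⟨x, hx, rfl⟩
  have hsub : (⋃ t ∈ Set.Ici (0 : ℝ), φ t '' V) ∩ {x | r x < c} ⊆ Q := by
    rintro w ⟨hwW, hwc⟩
    simp only [Set.mem_iUnion, Set.mem_Ici, Set.mem_image] at hwW
    obtain ⟨t, ht, x, hx, rfl⟩ := hwW
    by_cases hle : t ≤ T + c
    · exact ⟨(t, x), ⟨⟨ht, hle⟩, hx⟩, rfl⟩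
    · exfalso
      push_neg at hle
      have hTt : T ≤ t := by linarith
      have hbd := (hmain t hTt x hx).2
      have hsq : t - T ≤ Real.sqrt (r0 ^ 2 + (t - T) ^ 2) := by
        have h := Real.sqrt_le_sqrt (show (t - T) ^ 2 ≤ r0 ^ 2 + (t - T) ^ 2 by nlinarith)
        rwa [Real.sqrt_sq (by linarith)] at h
      have hwc' : r (φ t x) < c := hwc
      linarith
  have hzQ : z ∈ Q := by
    have hzcl : z ∈ closure ((⋃ t ∈ Set.Ici (0 : ℝ), φ t '' V) ∩ {x | r x < c}) := by
      rw [mem_closure_iff] at hz ⊢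
      intro o ho hzo
      obtain ⟨w, hwo, hwW⟩ :=
        hz (o ∩ {x | r x < c}) (ho.inter (isOpen_lt hr continuous_const)) ⟨hzo, hzc⟩
      exact ⟨w, hwo.1, hwW, hwo.2⟩
    have h := closure_mono hsub hzcl
    rwa [hQc.isClosed.closure_eq] at h
  exact hQW hzQ

/-- Lemma 2.1, part 4: if `V` is compact and `V ∩ Γ₋ = ∅`, then there is `T > 0`
such that for `t ≥ T` the flow sends `V` into `E₊°` with
`r ≥ √(r0² + (t−T)²)`, and `⋃_{t ≥ 0} φ_t(V)` is closed; symmetrically for `Γ₊`. -/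
theorem stmt5 {X : Type*} [MetricSpace X]
    (φ : ℝ → X → X)
    (hφ0 : ∀ x, φ 0 x = x)
    (hφadd : ∀ s t : ℝ, ∀ x, φ (s + t) x = φ s (φ t x))
    (hφcont : Continuous fun p : ℝ × X => φ p.1 p.2)
    (r : X → ℝ) (hr : Continuous r)
    (hrcomp : ∀ c : ℝ, IsCompact {x | r x ≤ c})
    (r0 : ℝ) (hr0 : 0 < r0)
    (Ep Em : Set X)
    (hEsub : Ep ∪ Em ⊆ {x | r0 ≤ r x})
    (hEsup : {x | r0 ≤ r x} ⊆ Ep ∪ Em)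
    (hEp : ∀ x ∈ Ep, ∀ t : ℝ, 0 ≤ t →
      φ t x ∈ Ep ∧ Real.sqrt (r x ^ 2 + t ^ 2) ≤ r (φ t x))
    (hEm : ∀ x ∈ Em, ∀ t : ℝ, 0 ≤ t →
      φ (-t) x ∈ Em ∧ Real.sqrt (r x ^ 2 + t ^ 2) ≤ r (φ (-t) x))
    (hEpInt : ∀ t : ℝ, 0 ≤ t → ∀ x ∈ interior Ep, φ t x ∈ interior Ep)
    (hEmInt : ∀ t : ℝ, 0 ≤ t → ∀ x ∈ interior Em, φ (-t) x ∈ interior Em)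
    (hout : ∀ x, r0 < r x → (∃ t0 : ℝ, 0 < t0 ∧ r (φ (-t0) x) ≤ r x) →
      x ∈ interior Ep)
    (hin : ∀ x, r0 < r x → (∃ t0 : ℝ, 0 < t0 ∧ r (φ t0 x) ≤ r x) →
      x ∈ interior Em) :
    ∀ V : Set X, IsCompact V →
      (V ∩ GammaMinus φ r = ∅ →
        ∃ T : ℝ, 0 < T ∧
          (∀ t : ℝ, T ≤ t → ∀ x ∈ V,
            φ t x ∈ interior Ep ∧
            Real.sqrt (r0 ^ 2 + (t - T) ^ 2) ≤ r (φ t x)) ∧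
          IsClosed (⋃ t ∈ Set.Ici (0 : ℝ), φ t '' V)) ∧
      (V ∩ GammaPlus φ r = ∅ →
        ∃ T : ℝ, 0 < T ∧
          (∀ t : ℝ, T ≤ t → ∀ x ∈ V,
            φ (-t) x ∈ interior Em ∧
            Real.sqrt (r0 ^ 2 + (t - T) ^ 2) ≤ r (φ (-t) x)) ∧
          IsClosed (⋃ t ∈ Set.Iic (0 : ℝ), φ t '' V)) := by

  intro V hV
  constructor
  · intro hdisj
    have htend : ∀ x ∈ V, Tendsto (fun t => r (φ t x)) atTop atTop := by
      intro x hx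
      by_contra h
      have hmem : x ∈ V ∩ GammaMinus φ r := ⟨hx, h⟩
      rw [hdisj] at hmem
      exact hmem
    exact auxlem5 φ hφ0 hφadd hφcont r hr r0 hr0 Ep (fun x hx => hEsub (Or.inl hx))
      hEp hEpInt hout V hV htend
  · intro hdisj
    have hψ0 : ∀ x, φ (-(0 : ℝ)) x = x := by intro x; rw [neg_zero, hφ0]
    have hψadd : ∀ s t : ℝ, ∀ x, φ (-(s + t)) x = φ (-s) (φ (-t) x) := by
      intro s t x; rw [neg_add, hφadd]
    have hψcont : Continuous fun p : ℝ × X => φ (-p.1) p.2 :=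
      hφcont.comp ((continuous_neg.comp continuous_fst).prodMk continuous_snd)
    have hψout : ∀ x, r0 < r x → (∃ t0 : ℝ, 0 < t0 ∧ r (φ (-(-t0)) x) ≤ r x) →
        x ∈ interior Em := by
      rintro x hx ⟨t0, h1, h2⟩
      exact hin x hx ⟨t0, h1, by simpa using h2⟩
    have htend : ∀ x ∈ V, Tendsto (fun t => r (φ (-t) x)) atTop atTop := by
      intro x hx
      have hx' : Tendsto (fun t => r (φ t x)) atBot atTop := by
        by_contra h
        have hmem : x ∈ V ∩ GammaPlus φ r := ⟨hx, h⟩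
        rw [hdisj] at hmem
        exact hmem
      exact hx'.comp tendsto_neg_atTop_atBot
    obtain ⟨T, hT, h1, h2⟩ :=
      auxlem5 (fun t x => φ (-t) x) hψ0 hψadd hψcont r hr r0 hr0 Em
        (fun x hx => hEsub (Or.inr hx)) hEm hEmInt hψout V hV htend
    refine ⟨T, hT, h1, ?_⟩
    have heq : (⋃ t ∈ Set.Iic (0 : ℝ), φ t '' V)
        = ⋃ t ∈ Set.Ici (0 : ℝ), (fun x => φ (-t) x) '' V := by
      ext w
      simp only [Set.mem_iUnion, Set.mem_Iic, Set.mem_Ici]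
      constructor
      · rintro ⟨t, ht, hw⟩
        exact ⟨-t, by linarith, by simpa using hw⟩
      · rintro ⟨t, ht, hw⟩
        exact ⟨-t, by linarith, hw⟩
    rw [heq]
    exact h2
end

section
/- Under the standing hypotheses on (X, φ, r, r0, E₊, E₋): if x ∈ Γ₋ then r(φ_t(x)) ≤ max(r(x), r0) for all t ≥ 0, and if x ∈ Γ₊ then r(φ_{−t}(x)) ≤ max(r(x), r0) for all t ≥ 0. In particular, forward (resp. backward) orbits of points of Γ₋ (resp. Γ₊) remain in a compact set. -/
open Filter

/-- Forward orbits of points of `Γ₋` and backward orbits of points of `Γ₊` stay in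
the compact region `{r ≤ max(r(x), r0)}`. -/
theorem stmt6 {X : Type*} [MetricSpace X]
    (φ : ℝ → X → X)
    (hφ0 : ∀ x, φ 0 x = x)
    (hφadd : ∀ s t : ℝ, ∀ x, φ (s + t) x = φ s (φ t x))
    (hφcont : Continuous fun p : ℝ × X => φ p.1 p.2)
    (r : X → ℝ) (hr : Continuous r)
    (hrcomp : ∀ c : ℝ, IsCompact {x | r x ≤ c})
    (r0 : ℝ) (hr0 : 0 < r0)
    (Ep Em : Set X)
    (hEsub : Ep ∪ Em ⊆ {x | r0 ≤ r x})
    (hEsup : {x | r0 ≤ r x} ⊆ Ep ∪ Em)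
    (hEp : ∀ x ∈ Ep, ∀ t : ℝ, 0 ≤ t →
      φ t x ∈ Ep ∧ Real.sqrt (r x ^ 2 + t ^ 2) ≤ r (φ t x))
    (hEm : ∀ x ∈ Em, ∀ t : ℝ, 0 ≤ t →
      φ (-t) x ∈ Em ∧ Real.sqrt (r x ^ 2 + t ^ 2) ≤ r (φ (-t) x))
    (hEpInt : ∀ t : ℝ, 0 ≤ t → ∀ x ∈ interior Ep, φ t x ∈ interior Ep)
    (hEmInt : ∀ t : ℝ, 0 ≤ t → ∀ x ∈ interior Em, φ (-t) x ∈ interior Em)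
    (hout : ∀ x, r0 < r x → (∃ t0 : ℝ, 0 < t0 ∧ r (φ (-t0) x) ≤ r x) →
      x ∈ interior Ep)
    (hin : ∀ x, r0 < r x → (∃ t0 : ℝ, 0 < t0 ∧ r (φ t0 x) ≤ r x) →
      x ∈ interior Em) :
    (∀ x ∈ GammaMinus φ r, ∀ t : ℝ, 0 ≤ t → r (φ t x) ≤ max (r x) r0) ∧
    (∀ x ∈ GammaPlus φ r, ∀ t : ℝ, 0 ≤ t → r (φ (-t) x) ≤ max (r x) r0) := by
  constructor
  · intro x hx t ht
    by_contra hgt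
    push_neg at hgt
    apply hx
    have ht0 : 0 < t := by
      rcases ht.lt_or_eq with h | h
      · exact h
      · exfalso; rw [← h, hφ0] at hgt
        exact absurd (le_max_left (r x) r0) (not_le.2 hgt)
    set y := φ t x with hy
    have hyr0 : r0 < r y := lt_of_le_of_lt (le_max_right _ _) hgt
    have hback : r (φ (-t) y) ≤ r y := by
      rw [hy, ← hφadd, neg_add_cancel, hφ0]
      exact le_of_lt (lt_of_le_of_lt (le_max_left _ _) hgt)
    have hyEp : y ∈ Ep := interior_subset (hout y hyr0 ⟨t, ht0, hback⟩)
    refine tendsto_atTop_mono' atTop ?_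
      (tendsto_atTop_add_const_right atTop (-t) tendsto_id)
    filter_upwards [eventually_ge_atTop t] with s hs
    have hst : (0:ℝ) ≤ s - t := by linarith
    have key := (hEp y hyEp (s - t) hst).2
    have heq : φ (s - t) y = φ s x := by
      rw [hy, ← hφadd, sub_add_cancel]
    have hsq : s - t ≤ Real.sqrt (r y ^ 2 + (s - t) ^ 2) := by
      calc s - t = Real.sqrt ((s - t) ^ 2) := (Real.sqrt_sq hst).symm
        _ ≤ _ := Real.sqrt_le_sqrt (by nlinarith [sq_nonneg (r y)])
    rw [heq] at key
    simpa using le_trans hsq key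
  · intro x hx t ht
    by_contra hgt
    push_neg at hgt
    apply hx
    have ht0 : 0 < t := by
      rcases ht.lt_or_eq with h | h
      · exact h
      · exfalso; rw [← h, neg_zero, hφ0] at hgt
        exact absurd (le_max_left (r x) r0) (not_le.2 hgt)
    set y := φ (-t) x with hy
    have hyr0 : r0 < r y := lt_of_le_of_lt (le_max_right _ _) hgt
    have hfwd : r (φ t y) ≤ r y := by
      rw [hy, ← hφadd, add_neg_cancel, hφ0]
      exact le_of_lt (lt_of_le_of_lt (le_max_left _ _) hgt)
    have hyEm : y ∈ Em := interior_subset (hin y hyr0 ⟨t, ht0, hfwd⟩)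
    refine tendsto_atTop_mono' atBot ?_
      (tendsto_atTop_add_const_right atBot (-t)
        (tendsto_neg_atBot_atTop))
    filter_upwards [eventually_le_atBot (-t)] with u hu
    have hst : (0:ℝ) ≤ -u - t := by linarith
    have key := (hEm y hyEm (-u - t) hst).2
    have heq : φ (-(-u - t)) y = φ u x := by
      rw [hy, ← hφadd]
      congr 1
      ring
    have hsq : -u - t ≤ Real.sqrt (r y ^ 2 + (-u - t) ^ 2) := by
      calc -u - t = Real.sqrt ((-u - t) ^ 2) := (Real.sqrt_sq hst).symm
        _ ≤ _ := Real.sqrt_le_sqrt (by nlinarith [sq_nonneg (r y)])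
    rw [heq] at key
    have : -u - t ≤ r (φ u x) := le_trans hsq key
    simpa using this
end

section
/- Let A, B ⊆ X and T > 0 be such that φ_{t1}(A) ∩ φ_{−t2}(A) ∩ B ∩ S = ∅ for all t1, t2 ≥ T. Then for all t ≥ 0 and t0 ≥ T: φ_{t0+T}(A ∩ φ_t(A)) ∩ A ∩ φ_{t+t0}(B) ∩ S = ∅, and φ_{−t0−T}(A ∩ φ_{−t}(A)) ∩ A ∩ φ_{−t−t0}(B) ∩ S = ∅. -/
/-- Set-theoretic content of Lemma 4.1, (4.2)–(4.3): if
`φ_{t1}(A) ∩ φ_{−t2}(A) ∩ B ∩ S = ∅` for all `t1, t2 ≥ T`, then for all `t ≥ 0`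
and `t0 ≥ T` one has `φ_{t0+T}(A ∩ φ_t(A)) ∩ A ∩ φ_{t+t0}(B) ∩ S = ∅` and the
time-reversed statement. -/
theorem stmt7 {X : Type*} (φ : ℝ → X → X)
    (hφ0 : ∀ x, φ 0 x = x)
    (hφadd : ∀ s t : ℝ, ∀ x, φ (s + t) x = φ s (φ t x))
    (S : Set X) (hS : ∀ t : ℝ, φ t '' S = S)
    (A B : Set X) (T : ℝ) (hT : 0 < T)
    (hyp : ∀ t1 t2 : ℝ, T ≤ t1 → T ≤ t2 →
      (φ t1 '' A) ∩ (φ (-t2) '' A) ∩ B ∩ S = ∅) :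
    ∀ t : ℝ, 0 ≤ t → ∀ t0 : ℝ, T ≤ t0 →
      (φ (t0 + T) '' (A ∩ φ t '' A)) ∩ (A ∩ φ (t + t0) '' B) ∩ S = ∅ ∧
      (φ (-(t0 + T)) '' (A ∩ φ (-t) '' A)) ∩ (A ∩ φ (-(t + t0)) '' B) ∩ S = ∅ := by
  intro t ht t0 ht0
  have hinv : ∀ s x, φ (-s) (φ s x) = x := fun s x => by
    rw [← hφadd]; simp [hφ0]
  have hinv' : ∀ s x, φ s (φ (-s) x) = x := fun s x => by
    rw [← hφadd]; simp [hφ0]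
  have hSmem : ∀ s x, x ∈ S → φ s x ∈ S := fun s x hx => by
    rw [← hS s]; exact ⟨x, hx, rfl⟩
  constructor
  · ext x
    simp only [Set.mem_inter_iff, Set.mem_empty_iff_false, iff_false, not_and]
    rintro ⟨⟨a, ⟨haA, a', ha'A, ha'⟩, hax⟩, hxA, b, hbB, hbx⟩ hxS
    have hyp' := hyp T (t + t0) le_rfl (by linarith)
    have key1 : φ (-(t + t0)) x = φ T a' := by
      rw [← hax, ← ha', ← hφadd, ← hφadd]; congr 1; ring
    have key2 : φ (-(t + t0)) x = b := by rw [← hbx, hinv]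
    have hymem : φ (-(t + t0)) x ∈ (φ T '' A) ∩ (φ (-(t + t0)) '' A) ∩ B ∩ S :=
      ⟨⟨⟨⟨a', ha'A, key1.symm⟩, ⟨x, hxA, rfl⟩⟩, key2 ▸ hbB⟩, hSmem _ _ hxS⟩
    rw [hyp'] at hymem
    exact hymem
  · ext x
    simp only [Set.mem_inter_iff, Set.mem_empty_iff_false, iff_false, not_and]
    rintro ⟨⟨a, ⟨haA, a', ha'A, ha'⟩, hax⟩, hxA, b, hbB, hbx⟩ hxS
    have hyp' := hyp (t + t0) T (by linarith) le_rfl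
    have key1 : φ (t + t0) x = φ (-T) a' := by
      rw [← hax, ← ha', ← hφadd, ← hφadd]; congr 1; ring
    have key2 : φ (t + t0) x = b := by rw [← hbx, hinv']
    have hymem : φ (t + t0) x ∈ (φ (t + t0) '' A) ∩ (φ (-T) '' A) ∩ B ∩ S :=
      ⟨⟨⟨⟨x, hxA, rfl⟩, ⟨a', ha'A, key1.symm⟩⟩, key2 ▸ hbB⟩, hSmem _ _ hxS⟩
    rw [hyp'] at hymem
    exact hymem
end

section
/- Let d ≥ 1 and let K1, K2 ⊆ ℝ^d × ℝ^d be compact sets with K1 ⊆ ℝ^d × (ℝ^d ∖ {0}). Assume that for every (y', η) ∈ K1 and every t ≥ 0, the point (y' + t·η/|η|, η) does not belong to K2. Then there exists c > 0 such that for all (y, η) ∈ K2 and (y', η) ∈ K1 (with the same second component η) and all t ≥ 0, |y − y' − t·η/|η|| ≥ c·√(1 + t²). -/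
private lemma stmt10_aux {E : Type*} [NormedAddCommGroup E] [NormedSpace ℝ E]
    (K1 K2 : Set (E × E))
    (hK1c : IsCompact K1) (hK2c : IsCompact K2)
    (hK1 : ∀ q ∈ K1, q.2 ≠ 0)
    (hyp : ∀ q ∈ K1, ∀ t : ℝ, 0 ≤ t → (q.1 + t • (‖q.2‖⁻¹ • q.2), q.2) ∉ K2) :
    ∃ c : ℝ, 0 < c ∧ ∀ p ∈ K2, ∀ q ∈ K1, p.2 = q.2 → ∀ t : ℝ, 0 ≤ t →
      c * Real.sqrt (1 + t ^ 2) ≤ ‖p.1 - q.1 - t • (‖q.2‖⁻¹ • q.2)‖ := by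
  obtain ⟨r1, hr1⟩ := hK1c.isBounded.subset_closedBall 0
  obtain ⟨r2, hr2⟩ := hK2c.isBounded.subset_closedBall 0
  set R : ℝ := max r1 0 + max r2 0 with hRdef
  have hR0 : 0 ≤ R := by positivity
  set T : ℝ := 2 * R + 1 with hTdef
  have hT1 : (1 : ℝ) ≤ T := by rw [hTdef]; linarith
  set P := (K2 ×ˢ K1) ∩ {x | x.1.2 = x.2.2} with hPdef
  by_cases hPne : P.Nonempty
  · -- main case
    have hPc : IsCompact P := (hK2c.prod hK1c).inter_right
      (isClosed_eq (continuous_snd.comp continuous_fst) (continuous_snd.comp continuous_snd))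
    set S := P ×ˢ Set.Icc (0 : ℝ) T with hSdef
    have hSc : IsCompact S := hPc.prod isCompact_Icc
    have hSne : S.Nonempty := hPne.prod ⟨0, le_refl 0, by linarith⟩
    set g : ((E × E) ×
        (E × E)) × ℝ → ℝ :=
      fun x => ‖x.1.1.1 - x.1.2.1 - x.2 • (‖x.1.2.2‖⁻¹ • x.1.2.2)‖ with hgdef
    have hgc : ContinuousOn g S := by
      apply ContinuousOn.norm
      apply ContinuousOn.sub
      · exact ((continuous_fst.fst.fst).sub (continuous_fst.snd.fst)).continuousOn
      · apply ContinuousOn.smul continuous_snd.continuousOn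
        apply ContinuousOn.smul
        · apply ContinuousOn.inv₀ (continuous_fst.snd.snd.norm.continuousOn)
          intro x hx
          exact norm_ne_zero_iff.2 (hK1 x.1.2 hx.1.1.2)
        · exact continuous_fst.snd.snd.continuousOn
    obtain ⟨x0, hx0S, hx0min⟩ := hSc.exists_isMinOn hSne hgc
    have hx0P : x0.1 ∈ P := hx0S.1
    have hε : 0 < g x0 := by
      rcases (norm_nonneg (x0.1.1.1 - x0.1.2.1 - x0.2 • (‖x0.1.2.2‖⁻¹ • x0.1.2.2))).lt_or_eq
        with h | h
      · exact h
      · exfalso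
        have hz : x0.1.1.1 - x0.1.2.1 - x0.2 • (‖x0.1.2.2‖⁻¹ • x0.1.2.2) = 0 :=
          norm_eq_zero.1 h.symm
        have h1 : x0.1.1.1 = x0.1.2.1 + x0.2 • (‖x0.1.2.2‖⁻¹ • x0.1.2.2) :=
          sub_eq_iff_eq_add'.1 (sub_eq_zero.1 hz)
        have hq1 : x0.1.2 ∈ K1 := hx0P.1.2
        have hp2 : x0.1.1.2 = x0.1.2.2 := hx0P.2
        apply hyp x0.1.2 hq1 x0.2 hx0S.2.1
        have heq : (x0.1.2.1 + x0.2 • (‖x0.1.2.2‖⁻¹ • x0.1.2.2), x0.1.2.2) = x0.1.1 :=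
          Prod.ext h1.symm hp2.symm
        rw [heq]
        exact hx0P.1.1
    set ε : ℝ := g x0 with hεdef
    have hsT : 0 < Real.sqrt (1 + T ^ 2) := Real.sqrt_pos.2 (by positivity)
    refine ⟨min (ε / Real.sqrt (1 + T ^ 2)) (1 / 4), lt_min (by positivity) (by norm_num),
      fun p hp q hq hpq t ht => ?_⟩
    have hω : ‖(‖q.2‖⁻¹ • q.2 : E)‖ = 1 :=
      norm_smul_inv_norm (hK1 q hq)
    by_cases htT : t ≤ T
    · -- compact time range
      have hmem : (((p, q), t) :
          ((E × E) ×
            (E × E)) × ℝ) ∈ S :=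
        ⟨⟨⟨hp, hq⟩, hpq⟩, ht, htT⟩
      have hge : ε ≤ ‖p.1 - q.1 - t • (‖q.2‖⁻¹ • q.2)‖ := hx0min hmem
      have hsle : Real.sqrt (1 + t ^ 2) ≤ Real.sqrt (1 + T ^ 2) :=
        Real.sqrt_le_sqrt (by nlinarith)
      calc min (ε / Real.sqrt (1 + T ^ 2)) (1 / 4) * Real.sqrt (1 + t ^ 2)
          ≤ (ε / Real.sqrt (1 + T ^ 2)) * Real.sqrt (1 + T ^ 2) :=
            mul_le_mul (min_le_left _ _) hsle (Real.sqrt_nonneg _)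
              (div_nonneg hε.le hsT.le)
        _ = ε := div_mul_cancel₀ _ hsT.ne'
        _ ≤ _ := hge
    · -- large time
      push_neg at htT
      have ht1 : (1 : ℝ) ≤ t := le_trans hT1 htT.le
      have hpq1 : ‖p.1 - q.1‖ ≤ R := by
        have h1 : ‖p.1‖ ≤ max r2 0 := by
          have h := hr2 hp
          rw [Metric.mem_closedBall, dist_zero_right] at h
          exact le_trans (norm_fst_le _) (le_trans h (le_max_left _ _))
        have h2 : ‖q.1‖ ≤ max r1 0 := by
          have h := hr1 hq
          rw [Metric.mem_closedBall, dist_zero_right] at h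
          exact le_trans (norm_fst_le _) (le_trans h (le_max_left _ _))
        calc ‖p.1 - q.1‖ ≤ ‖p.1‖ + ‖q.1‖ := norm_sub_le _ _
          _ ≤ R := by rw [hRdef]; linarith
      have htω : ‖t • (‖q.2‖⁻¹ • q.2 : E)‖ = t := by
        rw [norm_smul, hω, Real.norm_eq_abs, abs_of_nonneg ht, mul_one]
      have hlb : t - R ≤ ‖p.1 - q.1 - t • (‖q.2‖⁻¹ • q.2)‖ := by
        calc t - R
            ≤ ‖t • (‖q.2‖⁻¹ • q.2 : E)‖ - ‖p.1 - q.1‖ := by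
              rw [htω]; linarith
          _ ≤ ‖t • (‖q.2‖⁻¹ • q.2 : E) - (p.1 - q.1)‖ :=
              norm_sub_norm_le _ _
          _ = ‖p.1 - q.1 - t • (‖q.2‖⁻¹ • q.2)‖ := norm_sub_rev _ _
      have hs2t : Real.sqrt (1 + t ^ 2) ≤ 2 * t := by
        rw [show (2 * t) = Real.sqrt ((2 * t) ^ 2) from (Real.sqrt_sq (by linarith)).symm]
        exact Real.sqrt_le_sqrt (by nlinarith)
      have hRt : R ≤ (t - 1) / 2 := by
        have h : 2 * R + 1 ≤ t := by rw [← hTdef]; exact htT.le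
        linarith
      calc min (ε / Real.sqrt (1 + T ^ 2)) (1 / 4) * Real.sqrt (1 + t ^ 2)
          ≤ (1 / 4) * (2 * t) :=
            mul_le_mul (min_le_right _ _) hs2t (Real.sqrt_nonneg _) (by norm_num)
        _ ≤ t - R := by linarith
        _ ≤ _ := hlb
  · refine ⟨1, one_pos, fun p hp q hq hpq t ht => ?_⟩
    exact absurd ⟨(p, q), ⟨hp, hq⟩, hpq⟩ (fun h => hPne h)

/-- The key geometric estimate (3.24) in the proof of Lemma 3.5: if no forward
free trajectory starting on the compact set `K1 ⊆ ℝ^d × (ℝ^d ∖ 0)` ever meets the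
compact set `K2`, then there is `c > 0` such that
`‖y − y' − t·η/‖η‖‖ ≥ c·√(1 + t²)` for all `(y, η) ∈ K2`, `(y', η) ∈ K1`, `t ≥ 0`. -/
theorem stmt10 (d : ℕ) (hd : 1 ≤ d)
    (K1 K2 : Set (EuclideanSpace ℝ (Fin d) × EuclideanSpace ℝ (Fin d)))
    (hK1c : IsCompact K1) (hK2c : IsCompact K2)
    (hK1 : ∀ q ∈ K1, q.2 ≠ 0)
    (hyp : ∀ q ∈ K1, ∀ t : ℝ, 0 ≤ t → (q.1 + t • (‖q.2‖⁻¹ • q.2), q.2) ∉ K2) :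
    ∃ c : ℝ, 0 < c ∧ ∀ p ∈ K2, ∀ q ∈ K1, p.2 = q.2 → ∀ t : ℝ, 0 ≤ t →
      c * Real.sqrt (1 + t ^ 2) ≤ ‖p.1 - q.1 - t • (‖q.2‖⁻¹ • q.2)‖ :=
  stmt10_aux K1 K2 hK1c hK2c hK1 hyp
end

section
/- Let r : ℝ → ℝ be twice differentiable and suppose that for every t ∈ ℝ: if r(t) ≥ 0 then r''(t) ≥ 0, and if r(t) ≤ 0 then r''(t) ≤ 0. If r(0)·r'(0) ≥ 0, then |r(t)| ≥ |r(0)| + |r'(0)|·t for all t ≥ 0. If r(0)·r'(0) ≤ 0, then |r(−t)| ≥ |r(0)| + |r'(0)|·t for all t ≥ 0. -/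
/-!
Since `(r r')' = r'² + r r'' ≥ 0`, the product `r r'` is nondecreasing; hence once `r r' ≥ 0`
at time `0`, `r²` is nondecreasing on `[0, ∞)` and `r` cannot reach `0` after being nonzero.
So (up to replacing `r` by `-r`) `r > 0` on `(0, ∞)`, where `r'' ≥ 0` makes `r` convex and it
lies above its tangent line at `0`. The case `r(0) r'(0) ≤ 0` is the same statement for `t ↦ r(-t)`.
-/

open Set Filter Topology

section

variable {r r' r'' : ℝ → ℝ}

theorem HasDerivAt.eventually_pos_nhdsGT_of_eq_zero {d x : ℝ} (hr : HasDerivAt r d x)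
    (hd : 0 < d) (hx : r x = 0) : ∀ᶠ y in 𝓝[>] x, 0 < r y := by
  filter_upwards [(eventually_nhdsWithin_sign_eq_of_deriv_pos (hr.deriv ▸ hd) hx).filter_mono
    nhdsWithin_le_nhds, self_mem_nhdsWithin] with y hsign hy
  rwa [← sign_eq_one_iff, hsign, sign_eq_one_iff, sub_pos]

theorem monotone_mul_deriv_of_nonneg_mul_deriv2 (h1 : ∀ t, HasDerivAt r (r' t) t)
    (h2 : ∀ t, HasDerivAt r' (r'' t) t) (h : ∀ t, 0 ≤ r t * r'' t) :
    Monotone fun t => r t * r' t :=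
  monotone_of_deriv_nonneg (fun t => ((h1 t).mul (h2 t)).differentiableAt) fun t => by
    have hd : HasDerivAt (fun t => r t * r' t) (r' t * r' t + r t * r'' t) t := (h1 t).mul (h2 t)
    rw [hd.deriv]
    nlinarith [h t, mul_self_nonneg (r' t)]

theorem monotoneOn_sq_of_mul_deriv_nonneg {a : ℝ} (h1 : ∀ t, HasDerivAt r (r' t) t)
    (h : ∀ t ∈ Ici a, 0 ≤ r t * r' t) : MonotoneOn (fun t => r t ^ 2) (Ici a) := by
  refine monotoneOn_of_deriv_nonneg (convex_Ici a)
    (fun t _ => ((h1 t).pow 2).continuousAt.continuousWithinAt)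
    (fun t _ => ((h1 t).pow 2).differentiableAt.differentiableWithinAt) fun t ht => ?_
  rw [interior_Ici] at ht
  have hd : HasDerivAt (fun t => r t ^ 2) (2 * (r t * r' t)) t :=
    ((h1 t).pow 2).congr_deriv (by ring)
  rw [hd.deriv]
  nlinarith [h t (mem_Ici.2 (le_of_lt ht))]

theorem pos_of_monotoneOn_sq {a : ℝ} (hr : Continuous r)
    (hmono : MonotoneOn (fun t => r t ^ 2) (Ici a)) (ha : 0 < r a) : ∀ t ∈ Ici a, 0 < r t := by
  intro t ht
  by_contra! hneg
  obtain ⟨s, hs, hrs⟩ : ∃ s ∈ Icc a t, r s = 0 :=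
    intermediate_value_Icc' ht hr.continuousOn ⟨hneg, ha.le⟩
  have := hmono self_mem_Ici (mem_Ici.2 hs.1) hs.1
  simp only [hrs] at this
  nlinarith

theorem add_mul_le_of_nonneg_mul_deriv2 (h1 : ∀ t, HasDerivAt r (r' t) t)
    (h2 : ∀ t, HasDerivAt r' (r'' t) t) (h : ∀ t, 0 ≤ r t * r'' t)
    (hr0 : 0 ≤ r 0) (hr'0 : 0 ≤ r' 0) (hne : 0 < r 0 + r' 0) {t : ℝ} (ht : 0 ≤ t) :
    r 0 + r' 0 * t ≤ r t := by
  have hr : Continuous r := continuous_iff_continuousAt.2 fun t => (h1 t).continuousAt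
  have hsq : MonotoneOn (fun t => r t ^ 2) (Ici 0) :=
    monotoneOn_sq_of_mul_deriv_nonneg h1 fun t ht =>
      (mul_nonneg hr0 hr'0).trans (monotone_mul_deriv_of_nonneg_mul_deriv2 h1 h2 h ht)
  have hpos : ∀ t ∈ Ioi (0 : ℝ), 0 < r t := by
    intro t ht
    rcases hr0.lt_or_eq with hr0 | hr0
    · exact pos_of_monotoneOn_sq hr hsq hr0 t (mem_Ici.2 (le_of_lt ht))
    · obtain ⟨s, hrs, hs⟩ := (((h1 0).eventually_pos_nhdsGT_of_eq_zero (by linarith)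
        hr0.symm).and (Ioo_mem_nhdsGT ht)).exists
      exact pos_of_monotoneOn_sq hr (hsq.mono (Ici_subset_Ici.2 hs.1.le)) hrs t hs.2.le
  have hr'mono : MonotoneOn r' (Ici 0) := by
    refine monotoneOn_of_deriv_nonneg (convex_Ici 0)
      (fun t _ => (h2 t).continuousAt.continuousWithinAt)
      (fun t _ => (h2 t).differentiableAt.differentiableWithinAt) fun t ht => ?_
    rw [interior_Ici] at ht
    rw [(h2 t).deriv]
    exact (mul_nonneg_iff_of_pos_left (hpos t ht)).1 (h t)
  have := (convex_Ici 0).mul_sub_le_image_sub_of_le_deriv hr.continuousOn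
    (fun t _ => (h1 t).differentiableAt.differentiableWithinAt) (C := r' 0) (fun s hs => by
      rw [interior_Ici] at hs
      rw [(h1 s).deriv]
      exact hr'mono self_mem_Ici (mem_Ici.2 (le_of_lt hs)) (le_of_lt hs))
    0 self_mem_Ici t (mem_Ici.2 ht) ht
  linarith

theorem abs_add_mul_le_abs_of_nonneg_mul_deriv2 (h1 : ∀ t, HasDerivAt r (r' t) t)
    (h2 : ∀ t, HasDerivAt r' (r'' t) t) (h : ∀ t, 0 ≤ r t * r'' t)
    (h0 : 0 ≤ r 0 * r' 0) {t : ℝ} (ht : 0 ≤ t) : |r 0| + |r' 0| * t ≤ |r t| := by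
  rcases mul_nonneg_iff.1 h0 with ⟨hr0, hr'0⟩ | ⟨hr0, hr'0⟩
  · rcases (add_nonneg hr0 hr'0).lt_or_eq with hne | hne
    · rw [abs_of_nonneg hr0, abs_of_nonneg hr'0]
      exact (add_mul_le_of_nonneg_mul_deriv2 h1 h2 h hr0 hr'0 hne ht).trans (le_abs_self _)
    · simp [show r 0 = 0 by linarith, show r' 0 = 0 by linarith]
  · rcases (add_nonpos hr0 hr'0).lt_or_eq with hne | hne
    · have := add_mul_le_of_nonneg_mul_deriv2 (r := fun s => -r s) (fun t => (h1 t).neg)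
        (fun t => (h2 t).neg) (fun t => by simpa using h t) (by simpa using hr0)
        (by simpa using hr'0) (by linarith) ht
      rw [abs_of_nonpos hr0, abs_of_nonpos hr'0]
      linarith [neg_le_abs (r t)]
    · simp [show r 0 = 0 by linarith, show r' 0 = 0 by linarith]

end

/-- Lemma 7.1 in analytic form: if `r` is twice differentiable with `r·r'' ≥ 0`
pointwise (in the sign sense stated), then trajectories initially moving outward
escape at least linearly: `r(0)·r'(0) ≥ 0` implies `|r(t)| ≥ |r(0)| + |r'(0)|·t`
for `t ≥ 0`, and `r(0)·r'(0) ≤ 0` implies the same bound for `|r(−t)|`. -/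
theorem stmt14 (r r' r'' : ℝ → ℝ)
    (h1 : ∀ t : ℝ, HasDerivAt r (r' t) t)
    (h2 : ∀ t : ℝ, HasDerivAt r' (r'' t) t)
    (hsign1 : ∀ t : ℝ, 0 ≤ r t → 0 ≤ r'' t)
    (hsign2 : ∀ t : ℝ, r t ≤ 0 → r'' t ≤ 0) :
    (0 ≤ r 0 * r' 0 → ∀ t : ℝ, 0 ≤ t → |r 0| + |r' 0| * t ≤ |r t|) ∧
    (r 0 * r' 0 ≤ 0 → ∀ t : ℝ, 0 ≤ t → |r 0| + |r' 0| * t ≤ |r (-t)|) := by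
  have h : ∀ t, 0 ≤ r t * r'' t := fun t => by
    rcases le_total 0 (r t) with ht | ht
    · exact mul_nonneg ht (hsign1 t ht)
    · exact mul_nonneg_of_nonpos_of_nonpos ht (hsign2 t ht)
  refine ⟨fun h0 t ht => abs_add_mul_le_abs_of_nonneg_mul_deriv2 h1 h2 h h0 ht, fun h0 t ht => ?_⟩
  have h1' : ∀ s, HasDerivAt (fun u => r (-u)) (-r' (-s)) s := fun s => by
    simpa [Function.comp_def] using (h1 (-s)).comp s (hasDerivAt_neg s)
  have h2' : ∀ s, HasDerivAt (fun u => -r' (-u)) (r'' (-s)) s := fun s =>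
    ((h2 (-s)).comp s (hasDerivAt_neg s)).neg.congr_deriv (by ring)
  simpa using abs_add_mul_le_abs_of_nonneg_mul_deriv2 h1' h2' (fun s => h (-s))
    (by simpa using h0) ht
end
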